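/- arXiv:1908.10485 — 2 statements merged into one kernel-verified Lean document; each statement's English description precedes it below -/
import Mathlib

section
/- Let w be a real number. Let H = L²((0,1),ℂ) ⊕ L²((0,1),ℂ) and let D = {(f,g) ∈ H : f and g are restrictions to [0,1] of smooth functions ℝ → ℂ, and f(0) = f(1) = 0}. Let T_w : D → H be given by T_w(f,g) = (−g′ + w·g, f′ + w·f). Then the kernel of the Hilbert-space adjoint T_w† is exactly the one-dimensional subspace spanned by (0, e^{w·}), i.e. the pair whose 0-form component is 0 and whose 1-form component is the function x ↦ e^{wx}. -/
open MeasureTheory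

noncomputable section

/-- Lebesgue measure restricted to the open unit interval `(0,1)`. -/
abbrev unitIntervalMeasure : Measure ℝ := volume.restrict (Set.Ioo (0:ℝ) 1)

/-- `L²((0,1),ℂ)`. -/
abbrev L2I := Lp ℂ 2 unitIntervalMeasure

/-- `H = L²((0,1),ℂ) ⊕ L²((0,1),ℂ)`, with its Hilbert space structure. -/
abbrev EdgeHilbert := WithLp 2 (L2I × L2I)

/-- The class in `L²((0,1),ℂ)` of a function `ℝ → ℂ` (zero if the function is
not square-integrable on `(0,1)`). -/
noncomputable def toL2I (f : ℝ → ℂ) : L2I :=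
  open scoped Classical in
  if h : MemLp f 2 unitIntervalMeasure then h.toLp f else 0

/-- The element of `H = L² ⊕ L²` determined by a pair of functions. -/
noncomputable def edgePair (f g : ℝ → ℂ) : EdgeHilbert :=
  (WithLp.equiv 2 (L2I × L2I)).symm (toL2I f, toL2I g)

/-- The predicate that `(f,g)` represents an element of the domain `D`:
`f` and `g` are smooth functions `ℝ → ℂ` and `f(0) = f(1) = 0`. -/
def EdgeDomRep (f g : ℝ → ℂ) : Prop :=
  ContDiff ℝ (⊤ : ℕ∞) f ∧ ContDiff ℝ (⊤ : ℕ∞) g ∧ f 0 = 0 ∧ f 1 = 0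

/-- The Witten-type de Rham operator on an edge:
`T_w(f,g) = (−g′ + w·g, f′ + w·f)`, as an element of `H`. -/
noncomputable def wittenEdgeOp (w : ℝ) (f g : ℝ → ℂ) : EdgeHilbert :=
  edgePair (fun x => -deriv g x + w * g x) (fun x => deriv f x + w * f x)


/-! ### Auxiliary lemmas -/

instance : IsFiniteMeasure unitIntervalMeasure := by
  constructor
  rw [Measure.restrict_apply_univ, Real.volume_Ioo]
  norm_num

lemma memL2_of_continuous {f : ℝ → ℂ} (hf : Continuous f) : MemLp f 2 unitIntervalMeasure := by
  obtain ⟨C, hC⟩ := isCompact_Icc.exists_bound_of_continuousOn (s := Set.Icc (0:ℝ) 1)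
    hf.continuousOn
  refine MemLp.of_bound hf.aestronglyMeasurable C ?_
  refine (ae_restrict_iff' measurableSet_Ioo).2 (ae_of_all _ fun x hx => ?_)
  exact hC x (Set.Ioo_subset_Icc_self hx)

lemma coeFn_toL2I {f : ℝ → ℂ} (hf : MemLp f 2 unitIntervalMeasure) :
    toL2I f =ᵐ[unitIntervalMeasure] f := by
  rw [toL2I, dif_pos hf]; exact hf.coeFn_toLp

lemma toL2I_zero : toL2I (0 : ℝ → ℂ) = 0 := by
  rw [toL2I, dif_pos MemLp.zero, MemLp.toLp_zero]

lemma integrable_L2 (v : L2I) : Integrable (⇑v) unitIntervalMeasure :=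
  (Lp.memLp v).integrable one_le_two

lemma integrable_conj {f : ℝ → ℂ} (hf : Integrable f unitIntervalMeasure) :
    Integrable (fun x => (starRingEnd ℂ) (f x)) unitIntervalMeasure := by
  refine hf.norm.mono' (continuous_star.comp_aestronglyMeasurable hf.aestronglyMeasurable)
    (ae_of_all _ fun x => ?_)
  simp

lemma inner_toL2I_right (v : L2I) {A : ℝ → ℂ} (hA : MemLp A 2 unitIntervalMeasure) :
    inner ℂ v (toL2I A) = ∫ x, (starRingEnd ℂ) (v x) * A x ∂unitIntervalMeasure := by
  rw [L2.inner_def]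
  refine integral_congr_ae ?_
  filter_upwards [coeFn_toL2I hA] with x hx
  rw [hx, RCLike.inner_apply, mul_comm]

lemma inner_toL2I_left (v : L2I) {A : ℝ → ℂ} (hA : MemLp A 2 unitIntervalMeasure) :
    inner ℂ (toL2I A) v = ∫ x, (starRingEnd ℂ) (A x) * v x ∂unitIntervalMeasure := by
  rw [L2.inner_def]
  refine integral_congr_ae ?_
  filter_upwards [coeFn_toL2I hA] with x hx
  rw [hx, RCLike.inner_apply, mul_comm]

lemma integrable_contMul {F : ℝ → ℂ} (hF : Integrable F unitIntervalMeasure)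
    {G : ℝ → ℂ} (hG : Continuous G) :
    Integrable (fun x => G x * F x) unitIntervalMeasure := by
  obtain ⟨C, hC⟩ := isCompact_Icc.exists_bound_of_continuousOn (s := Set.Icc (0:ℝ) 1)
    hG.continuousOn
  refine hF.bdd_mul (c := C) hG.aestronglyMeasurable ?_
  refine (ae_restrict_iff' measurableSet_Ioo).2 (ae_of_all _ fun x hx => ?_)
  exact hC x (Set.Ioo_subset_Icc_self hx)

lemma keyLemma {F : ℝ → ℂ} (hF : Integrable F unitIntervalMeasure)
    (h : ∀ n : ℕ, ∫ x, (x:ℂ)^n * F x ∂unitIntervalMeasure = 0) :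
    F =ᵐ[unitIntervalMeasure] 0 := by
  have hp : ∀ p : Polynomial ℝ, ∫ x, ((p.eval x : ℝ) : ℂ) * F x ∂unitIntervalMeasure = 0 := by
    intro p
    induction p using Polynomial.induction_on' with
    | add p q hpder hqder =>
      have h1 : Integrable (fun x => ((p.eval x : ℝ) : ℂ) * F x) unitIntervalMeasure :=
        integrable_contMul hF (Complex.continuous_ofReal.comp p.continuous)
      have h2 : Integrable (fun x => ((q.eval x : ℝ) : ℂ) * F x) unitIntervalMeasure :=
        integrable_contMul hF (Complex.continuous_ofReal.comp q.continuous)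
      have : ∫ x, (((p+q).eval x : ℝ) : ℂ) * F x ∂unitIntervalMeasure
          = (∫ x, ((p.eval x : ℝ) : ℂ) * F x ∂unitIntervalMeasure)
            + ∫ x, ((q.eval x : ℝ) : ℂ) * F x ∂unitIntervalMeasure := by
        rw [← integral_add h1 h2]
        refine integral_congr_ae (ae_of_all _ fun x => ?_)
        push_cast [Polynomial.eval_add]
        ring
      rw [this, hpder, hqder, add_zero]
    | monomial n a =>
      have : ∫ x, (((Polynomial.monomial n a).eval x : ℝ) : ℂ) * F x ∂unitIntervalMeasure
          = a • ∫ x, (x:ℂ)^n * F x ∂unitIntervalMeasure := by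
        rw [← integral_smul]
        refine integral_congr_ae (ae_of_all _ fun x => ?_)
        push_cast [Polynomial.eval_monomial]
        simp [Complex.real_smul]
        ring
      rw [this, h n, smul_zero]
  refine ae_eq_zero_of_integral_contDiff_smul_eq_zero hF.locallyIntegrable ?_
  intro g hg hgsupp
  set M := ∫ x, ‖F x‖ ∂unitIntervalMeasure with hM
  have hM0 : 0 ≤ M := integral_nonneg fun x => norm_nonneg _
  have key : ∀ ε : ℝ, 0 < ε → ‖∫ x, g x • F x ∂unitIntervalMeasure‖ ≤ ε * M := by
    intro ε hε
    obtain ⟨p, hp'⟩ := exists_polynomial_near_of_continuousOn 0 1 g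
      hg.continuous.continuousOn ε hε
    have hgi : Integrable (fun x => g x • F x) unitIntervalMeasure := by
      have heq : (fun x => g x • F x) = fun x => ((g x : ℝ) : ℂ) * F x := by
        funext x; simp [Complex.real_smul]
      rw [heq]
      exact integrable_contMul hF (Complex.continuous_ofReal.comp hg.continuous)
    have hpi : Integrable (fun x => ((p.eval x : ℝ) : ℂ) * F x) unitIntervalMeasure :=
      integrable_contMul hF (Complex.continuous_ofReal.comp p.continuous)
    have : ∫ x, g x • F x ∂unitIntervalMeasure
        = ∫ x, (g x • F x - ((p.eval x : ℝ) : ℂ) * F x) ∂unitIntervalMeasure := by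
      rw [integral_sub hgi hpi, hp p, sub_zero]
    rw [this]
    refine (norm_integral_le_of_norm_le (hF.norm.const_mul ε) ?_).trans ?_
    · refine (ae_restrict_iff' measurableSet_Ioo).2 (ae_of_all _ fun x hx => ?_)
      have : g x • F x - ((p.eval x : ℝ) : ℂ) * F x = ((g x - p.eval x : ℝ) : ℂ) * F x := by
        push_cast [Complex.real_smul]; ring
      rw [this, norm_mul]
      refine mul_le_mul_of_nonneg_right ?_ (norm_nonneg _)
      rw [Complex.norm_real, Real.norm_eq_abs, abs_sub_comm]
      exact (hp' x (Set.Ioo_subset_Icc_self hx)).le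
    · rw [integral_const_mul]
  have : ‖∫ x, g x • F x ∂unitIntervalMeasure‖ ≤ 0 := by
    refine le_of_forall_pos_le_add ?_
    intro ε hε
    have h1 := key (ε / (M+1)) (by positivity)
    calc ‖∫ x, g x • F x ∂unitIntervalMeasure‖ ≤ ε / (M+1) * M := h1
      _ ≤ ε := by
          rw [div_mul_eq_mul_div, div_le_iff₀ (by linarith)]
          nlinarith
      _ ≤ 0 + ε := by linarith
  simpa using norm_le_zero_iff.1 this

lemma contDiff_ofReal : ContDiff ℝ (⊤ : ℕ∞) (fun x : ℝ => (x:ℂ)) :=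
  Complex.ofRealCLM.contDiff

lemma contDiff_ofReal_pow (n : ℕ) : ContDiff ℝ (⊤ : ℕ∞) (fun x : ℝ => (x:ℂ)^n) :=
  contDiff_ofReal.pow n

lemma contDiff_expw (w : ℝ) : ContDiff ℝ (⊤ : ℕ∞) (fun x : ℝ => Complex.exp (w * x)) :=
  ((Complex.contDiff_exp (𝕜 := ℂ)).restrict_scalars ℝ).comp
    (contDiff_const.mul Complex.ofRealCLM.contDiff)

lemma hasDerivAt_expw (w : ℝ) (x : ℝ) :
    HasDerivAt (fun x : ℝ => Complex.exp (w * x)) (w * Complex.exp (w * x)) x := by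
  have h1 : HasDerivAt (fun x : ℝ => ((w:ℂ) * (x:ℂ))) (w:ℂ) x := by
    simpa using ((hasDerivAt_id x).ofReal_comp).const_mul (w:ℂ)
  simpa [mul_comm] using h1.cexp

lemma hasDerivAt_ofReal_pow (n : ℕ) (x : ℝ) :
    HasDerivAt (fun x : ℝ => (x:ℂ)^(n+1)) (((n:ℂ)+1) * (x:ℂ)^n) x := by
  have h0 : HasDerivAt (fun z : ℂ => z^(n+1)) (((n:ℂ)+1) * (x:ℂ)^n) (x:ℂ) := by
    simpa using hasDerivAt_pow (n+1) ((x:ℂ))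
  simpa using h0.comp_ofReal

lemma integral_deriv_unit (h : ℝ → ℂ) (hd : Differentiable ℝ h) (hc : Continuous (deriv h)) :
    ∫ x, deriv h x ∂unitIntervalMeasure = h 1 - h 0 := by
  have : ∫ x, deriv h x ∂unitIntervalMeasure = ∫ x in (0:ℝ)..1, deriv h x := by
    rw [intervalIntegral.integral_of_le (by norm_num), integral_Ioc_eq_integral_Ioo]
  rw [this]
  exact intervalIntegral.integral_deriv_eq_sub (fun x _ => (hd x))
    (hc.intervalIntegrable 0 1)

lemma integral_monomial (n : ℕ) :
    ∫ x, (x:ℂ)^n ∂unitIntervalMeasure = (((n:ℝ)+1)⁻¹ : ℂ) := by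
  have h1 : ∫ x, (x:ℂ)^n ∂unitIntervalMeasure
      = ((∫ x, x^n ∂unitIntervalMeasure : ℝ) : ℂ) := by
    simpa using (integral_ofReal (𝕜 := ℂ) (f := fun x : ℝ => x^n) (μ := unitIntervalMeasure))
  have h2 : (∫ x, x^n ∂unitIntervalMeasure : ℝ) = ∫ x in (0:ℝ)..1, x^n := by
    rw [intervalIntegral.integral_of_le (by norm_num), integral_Ioc_eq_integral_Ioo]
  rw [h1, h2, integral_pow]
  push_cast
  ring

lemma contDiff_differentiable {g : ℝ → ℂ} (hg : ContDiff ℝ (⊤ : ℕ∞) g) : Differentiable ℝ g :=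
  (contDiff_one_iff_deriv.1 (hg.of_le (by simp))).1

lemma contDiff_continuous_deriv {g : ℝ → ℂ} (hg : ContDiff ℝ (⊤ : ℕ∞) g) : Continuous (deriv g) :=
  (contDiff_one_iff_deriv.1 (hg.of_le (by simp))).2

lemma conj_expw (w x : ℝ) :
    (starRingEnd ℂ) (Complex.exp (w * x)) = Complex.exp (w * x) := by
  rw [← Complex.exp_conj]
  norm_num

lemma inner_edgePair_left {f g : ℝ → ℂ} (hf : MemLp f 2 unitIntervalMeasure)
    (hg : MemLp g 2 unitIntervalMeasure) (u : EdgeHilbert) :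
    inner ℂ (edgePair f g) u
      = (∫ x, (starRingEnd ℂ) (f x) * (u.fst x) ∂unitIntervalMeasure)
        + ∫ x, (starRingEnd ℂ) (g x) * (u.snd x) ∂unitIntervalMeasure := by
  rw [WithLp.prod_inner_apply]
  change inner ℂ (edgePair f g).fst u.fst + inner ℂ (edgePair f g).snd u.snd = _
  rw [show (edgePair f g).fst = toL2I f from rfl, show (edgePair f g).snd = toL2I g from rfl]
  rw [inner_toL2I_left u.fst hf, inner_toL2I_left u.snd hg]

lemma inner_edgePair_right {f g : ℝ → ℂ} (hf : MemLp f 2 unitIntervalMeasure)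
    (hg : MemLp g 2 unitIntervalMeasure) (u : EdgeHilbert) :
    inner ℂ u (edgePair f g)
      = (∫ x, (starRingEnd ℂ) (u.fst x) * f x ∂unitIntervalMeasure)
        + ∫ x, (starRingEnd ℂ) (u.snd x) * g x ∂unitIntervalMeasure := by
  rw [WithLp.prod_inner_apply]
  change inner ℂ u.fst (edgePair f g).fst + inner ℂ u.snd (edgePair f g).snd = _
  rw [show (edgePair f g).fst = toL2I f from rfl, show (edgePair f g).snd = toL2I g from rfl]
  rw [inner_toL2I_right u.fst hf, inner_toL2I_right u.snd hg]

lemma memL2_opA {g : ℝ → ℂ} (hg : ContDiff ℝ (⊤ : ℕ∞) g) (w : ℝ) :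
    MemLp (fun x => -deriv g x + (w:ℂ) * g x) 2 unitIntervalMeasure :=
  memL2_of_continuous (((contDiff_continuous_deriv hg).neg).add
    (continuous_const.mul hg.continuous))

lemma memL2_opB {f : ℝ → ℂ} (hf : ContDiff ℝ (⊤ : ℕ∞) f) (w : ℝ) :
    MemLp (fun x => deriv f x + (w:ℂ) * f x) 2 unitIntervalMeasure :=
  memL2_of_continuous ((contDiff_continuous_deriv hf).add
    (continuous_const.mul hf.continuous))


/-- Let `w` be a real number and let `T_w(f,g) = (−g′ + w·g, f′ + w·f)` with domain
`D = {(f,g) : f, g smooth, f(0) = f(1) = 0}` in `H = L²((0,1),ℂ) ⊕ L²((0,1),ℂ)`.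
Then the kernel of the Hilbert-space adjoint `T_w†` is exactly the one-dimensional
subspace spanned by `(0, x ↦ e^{wx})`. -/
theorem wittenEdgeOp_adjoint_kernel (w : ℝ)
    (T : EdgeHilbert →ₗ.[ℂ] EdgeHilbert)
    (hdom : ∀ u : EdgeHilbert,
      u ∈ T.domain ↔ ∃ f g : ℝ → ℂ, EdgeDomRep f g ∧ u = edgePair f g)
    (hact : ∀ (f g : ℝ → ℂ), EdgeDomRep f g →
      ∀ hu : edgePair f g ∈ T.domain, T ⟨edgePair f g, hu⟩ = wittenEdgeOp w f g) :
    {u : EdgeHilbert | ∃ hu : u ∈ T.adjoint.domain, T.adjoint ⟨u, hu⟩ = 0}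
      = ↑(Submodule.span ℂ
          {edgePair 0 (fun x => Complex.exp (w * x))}) := by
  classical
  set expw : ℝ → ℂ := fun x => Complex.exp (w * x) with hexpw
  set e₀ : EdgeHilbert := edgePair 0 expw with he₀
  -- density of the domain
  have hT : Dense (T.domain : Set EdgeHilbert) := by
    rw [Submodule.dense_iff_topologicalClosure_eq_top,
      Submodule.topologicalClosure_eq_top_iff]
    rw [Submodule.eq_bot_iff]
    intro v hv
    rw [Submodule.mem_orthogonal] at hv
    -- second component vanishes
    have hv2 : ⇑v.snd =ᵐ[unitIntervalMeasure] 0 := by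
      refine keyLemma (integrable_L2 v.snd) fun n => ?_
      have hrep : EdgeDomRep 0 (fun x : ℝ => (x:ℂ)^n) :=
        ⟨contDiff_const, contDiff_ofReal_pow n, rfl, rfl⟩
      have hmem : edgePair 0 (fun x : ℝ => (x:ℂ)^n) ∈ T.domain := (hdom _).2 ⟨_, _, hrep, rfl⟩
      have h0 := hv _ hmem
      rw [inner_edgePair_left (f := 0) MemLp.zero
        (memL2_of_continuous (contDiff_ofReal_pow n).continuous) v] at h0
      have h1 : ∫ x, (starRingEnd ℂ) ((0 : ℝ → ℂ) x) * (v.fst x) ∂unitIntervalMeasure = 0 := by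
        simp
      rw [h1, zero_add] at h0
      rw [← h0]
      refine integral_congr_ae (ae_of_all _ fun x => ?_)
      simp only [map_pow, Complex.conj_ofReal]
    -- first component vanishes
    have hv1 : ⇑v.fst =ᵐ[unitIntervalMeasure] 0 := by
      have hkey : (fun x : ℝ => ((x:ℂ) * (1 - (x:ℂ))) * v.fst x) =ᵐ[unitIntervalMeasure] 0 := by
        refine keyLemma ?_ fun n => ?_
        · exact integrable_contMul (integrable_L2 v.fst)
            (by exact (Complex.continuous_ofReal.mul
              (continuous_const.sub Complex.continuous_ofReal)))
        have hfc : ContDiff ℝ (⊤ : ℕ∞) (fun x : ℝ => (x:ℂ)^(n+1) * (1 - (x:ℂ))) :=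
          (contDiff_ofReal_pow (n+1)).mul (contDiff_const.sub contDiff_ofReal)
        have hrep : EdgeDomRep (fun x : ℝ => (x:ℂ)^(n+1) * (1 - (x:ℂ))) 0 :=
          ⟨hfc, contDiff_const, by simp, by simp⟩
        have hmem : edgePair (fun x : ℝ => (x:ℂ)^(n+1) * (1 - (x:ℂ))) 0 ∈ T.domain :=
          (hdom _).2 ⟨_, _, hrep, rfl⟩
        have h0 := hv _ hmem
        rw [inner_edgePair_left (g := 0) (memL2_of_continuous hfc.continuous)
          MemLp.zero v] at h0
        have h1 : ∫ x, (starRingEnd ℂ) ((0 : ℝ → ℂ) x) * (v.snd x) ∂unitIntervalMeasure = 0 := by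
          simp
        rw [h1, add_zero] at h0
        rw [← h0]
        refine integral_congr_ae (ae_of_all _ fun x => ?_)
        simp only [map_mul, map_pow, map_sub, map_one, Complex.conj_ofReal]
        ring
      filter_upwards [hkey, ae_restrict_mem measurableSet_Ioo] with x hx hxIoo
      have hx0 : (x:ℂ) ≠ 0 := by
        simpa using ne_of_gt hxIoo.1
      have hx1 : (1:ℂ) - (x:ℂ) ≠ 0 := by
        rw [sub_ne_zero]
        intro hcontra
        have : (x:ℝ) = 1 := by exact_mod_cast hcontra.symm
        exact absurd this (ne_of_lt hxIoo.2)
      simpa [mul_eq_zero, hx0, hx1] using hx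
    have : v = 0 := by
      have h1 : v.fst = 0 := Lp.ext (hv1.trans (Lp.coeFn_zero ℂ 2 unitIntervalMeasure).symm)
      have h2 : v.snd = 0 := Lp.ext (hv2.trans (Lp.coeFn_zero ℂ 2 unitIntervalMeasure).symm)
      exact (WithLp.equiv 2 _).injective (Prod.ext h1 h2)
    exact this
  -- inner product of e₀ against T v vanishes
  have hinner0 : ∀ v : T.domain, inner ℂ e₀ (T v) = 0 := by
    intro v
    obtain ⟨f, g, hrep, heq⟩ := (hdom v.1).1 v.2
    have hveq : v = ⟨edgePair f g, heq ▸ v.2⟩ := Subtype.ext heq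
    rw [hveq, hact f g hrep _]
    rw [wittenEdgeOp, he₀, hexpw]
    rw [inner_edgePair_right (memL2_opA hrep.2.1 w) (memL2_opB hrep.1 w)]
    have hfst : ∫ x, (starRingEnd ℂ) ((edgePair 0 (fun x : ℝ => Complex.exp (w * x))).fst x)
        * (-deriv g x + (w:ℂ) * g x) ∂unitIntervalMeasure = 0 := by
      rw [show (edgePair 0 (fun x : ℝ => Complex.exp (w * x))).fst = toL2I 0 from rfl]
      refine integral_eq_zero_of_ae ?_
      filter_upwards [coeFn_toL2I (MemLp.zero (p := 2) (μ := unitIntervalMeasure))] with x hx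
      rw [hx]
      simp
    have hsnd : ∫ x, (starRingEnd ℂ) ((edgePair 0 (fun x : ℝ => Complex.exp (w * x))).snd x)
        * (deriv f x + (w:ℂ) * f x) ∂unitIntervalMeasure = 0 := by
      rw [show (edgePair 0 (fun x : ℝ => Complex.exp (w * x))).snd
        = toL2I (fun x : ℝ => Complex.exp (w * x)) from rfl]
      have hstep : ∫ x, (starRingEnd ℂ) ((toL2I (fun x : ℝ => Complex.exp (w * x))) x)
          * (deriv f x + (w:ℂ) * f x) ∂unitIntervalMeasure
          = ∫ x, deriv (fun x : ℝ => Complex.exp (w * x) * f x) x ∂unitIntervalMeasure := by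
        refine integral_congr_ae ?_
        filter_upwards [coeFn_toL2I (memL2_of_continuous (contDiff_expw w).continuous)]
          with x hx
        rw [hx, conj_expw]
        have hD : HasDerivAt (fun y : ℝ => Complex.exp (w * y) * f y)
            (((w:ℂ) * Complex.exp (w * x)) * f x + Complex.exp (w * x) * deriv f x) x :=
          (hasDerivAt_expw w x).mul ((contDiff_differentiable hrep.1 x).hasDerivAt)
        rw [hD.deriv]
        ring
      rw [hstep]
      have hDall : ∀ y : ℝ, deriv (fun x : ℝ => Complex.exp (w * x) * f x) y
          = ((w:ℂ) * Complex.exp (w * y)) * f y + Complex.exp (w * y) * deriv f y := fun y =>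
        (((hasDerivAt_expw w y).mul ((contDiff_differentiable hrep.1 y).hasDerivAt))).deriv
      rw [integral_deriv_unit (fun x : ℝ => Complex.exp (w * x) * f x)
        (fun x => ((hasDerivAt_expw w x).mul
          ((contDiff_differentiable hrep.1 x).hasDerivAt)).differentiableAt)
        (by
          rw [show deriv (fun x : ℝ => Complex.exp (w * x) * f x)
            = fun y : ℝ => ((w:ℂ) * Complex.exp (w * y)) * f y + Complex.exp (w * y) * deriv f y
            from funext hDall]
          exact ((continuous_const.mul (contDiff_expw w).continuous).mul hrep.1.continuous).add
            ((contDiff_expw w).continuous.mul (contDiff_continuous_deriv hrep.1)))]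
      simp [hrep.2.2.1, hrep.2.2.2]
    rw [hfst, hsnd, add_zero]
  -- e₀ belongs to the adjoint domain
  have hmem : e₀ ∈ T.adjoint.domain := by
    refine LinearPMap.mem_adjoint_domain_of_exists _ ⟨0, fun v => ?_⟩
    rw [inner_zero_left, hinner0 v]
  -- the adjoint vanishes on e₀
  have hval : T.adjoint ⟨e₀, hmem⟩ = 0 :=
    LinearPMap.adjoint_apply_eq hT _ (fun v => by
      rw [inner_zero_left]; exact (hinner0 v).symm)
  have hderiv_zero : ∀ x : ℝ, deriv (0 : ℝ → ℂ) x = 0 := fun x => deriv_const x (0:ℂ)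
  ext u
  simp only [Set.mem_setOf_eq, SetLike.mem_coe]
  constructor
  · rintro ⟨hu, hu0⟩
    -- `u` is orthogonal to the range of `T`
    have hTu : ∀ v : T.domain, inner ℂ u (T v) = 0 := by
      intro v
      have hfa := LinearPMap.adjoint_isFormalAdjoint hT ⟨u, hu⟩ v
      rw [hu0] at hfa
      rw [← hfa]
      exact inner_zero_left _
    have hcond : ∀ f g : ℝ → ℂ, EdgeDomRep f g →
        (∫ x, (starRingEnd ℂ) (u.fst x) * (-deriv g x + (w:ℂ) * g x) ∂unitIntervalMeasure)
          + (∫ x, (starRingEnd ℂ) (u.snd x) * (deriv f x + (w:ℂ) * f x) ∂unitIntervalMeasure)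
          = 0 := by
      intro f g hrep
      have hmem' : edgePair f g ∈ T.domain := (hdom _).2 ⟨f, g, hrep, rfl⟩
      have h1 := hTu ⟨edgePair f g, hmem'⟩
      rw [hact f g hrep hmem', wittenEdgeOp,
        inner_edgePair_right (memL2_opA hrep.2.1 w) (memL2_opB hrep.1 w)] at h1
      exact h1
    -- the 0-form component of u vanishes
    have hfst0 : ⇑u.fst =ᵐ[unitIntervalMeasure] 0 := by
      have hkey : (fun x : ℝ => Complex.exp (w*x) * (starRingEnd ℂ) (u.fst x))
          =ᵐ[unitIntervalMeasure] 0 := by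
        refine keyLemma (integrable_contMul (integrable_conj (integrable_L2 u.fst))
          (contDiff_expw w).continuous) fun n => ?_
        have hrep : EdgeDomRep 0 (fun x : ℝ => (x:ℂ)^(n+1) * Complex.exp (w*x)) :=
          ⟨contDiff_const, (contDiff_ofReal_pow (n+1)).mul (contDiff_expw w), rfl, rfl⟩
        have h1 := hcond _ _ hrep
        have h2 : ∫ x, (starRingEnd ℂ) (u.snd x)
            * (deriv (0 : ℝ → ℂ) x + (w:ℂ) * (0 : ℝ → ℂ) x) ∂unitIntervalMeasure = 0 := by
          refine integral_eq_zero_of_ae (ae_of_all _ fun x => ?_)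
          simp [hderiv_zero x]
        rw [h2, add_zero] at h1
        have hD : ∀ x : ℝ, HasDerivAt (fun x : ℝ => (x:ℂ)^(n+1) * Complex.exp (w*x))
            ((((n:ℂ)+1) * (x:ℂ)^n) * Complex.exp (w*x)
              + (x:ℂ)^(n+1) * ((w:ℂ) * Complex.exp (w*x))) x := fun x =>
          (hasDerivAt_ofReal_pow n x).mul (hasDerivAt_expw w x)
        have h4 : ∫ x, (starRingEnd ℂ) (u.fst x)
              * (-deriv (fun x : ℝ => (x:ℂ)^(n+1) * Complex.exp (w*x)) x
                + (w:ℂ) * ((x:ℂ)^(n+1) * Complex.exp (w*x))) ∂unitIntervalMeasure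
            = (-((n:ℂ)+1)) * ∫ x, (x:ℂ)^n
              * (Complex.exp (w*x) * (starRingEnd ℂ) (u.fst x)) ∂unitIntervalMeasure := by
          rw [← integral_const_mul]
          refine integral_congr_ae (ae_of_all _ fun x => ?_)
          simp only [(hD x).deriv]
          ring
        rw [h4] at h1
        have hne : (-((n:ℂ)+1)) ≠ 0 :=
          neg_ne_zero.2 (Nat.cast_add_one_ne_zero n)
        rcases mul_eq_zero.1 h1 with h | h
        · exact absurd h hne
        · exact h
      filter_upwards [hkey] with x hx
      have : (starRingEnd ℂ) (u.fst x) = 0 := by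
        rcases mul_eq_zero.1 hx with h | h
        · exact absurd h (Complex.exp_ne_zero _)
        · exact h
      simpa using congrArg (starRingEnd ℂ) this
    -- the 1-form component of u is a multiple of e^{wx}
    set F₂ : ℝ → ℂ := fun x => Complex.exp ((-w : ℝ) * x) * (starRingEnd ℂ) (u.snd x) with hF₂
    have hF₂int : Integrable F₂ unitIntervalMeasure :=
      integrable_contMul (integrable_conj (integrable_L2 u.snd)) (contDiff_expw (-w)).continuous
    set K : ℂ := ∫ x, F₂ x ∂unitIntervalMeasure with hK
    have hmom : ∀ n : ℕ, ∫ x, (x:ℂ)^n * F₂ x ∂unitIntervalMeasure = K / ((n:ℂ)+1) := by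
      intro n
      have hne : ((n:ℂ)+1) ≠ 0 := Nat.cast_add_one_ne_zero n
      have hrep : EdgeDomRep (fun x : ℝ => ((x:ℂ)^(n+1) - (x:ℂ)) * Complex.exp ((-w:ℝ) * x)) 0 :=
        ⟨((contDiff_ofReal_pow (n+1)).sub contDiff_ofReal).mul (contDiff_expw (-w)),
          contDiff_const, by simp, by simp⟩
      have h1 := hcond _ _ hrep
      have h2 : ∫ x, (starRingEnd ℂ) (u.fst x)
          * (-deriv (0 : ℝ → ℂ) x + (w:ℂ) * (0 : ℝ → ℂ) x) ∂unitIntervalMeasure = 0 := by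
        refine integral_eq_zero_of_ae (ae_of_all _ fun x => ?_)
        simp [hderiv_zero x]
      rw [h2, zero_add] at h1
      have hD : ∀ x : ℝ, HasDerivAt (fun x : ℝ => ((x:ℂ)^(n+1) - (x:ℂ)) * Complex.exp ((-w:ℝ) * x))
          (((((n:ℂ)+1) * (x:ℂ)^n) - 1) * Complex.exp ((-w:ℝ)*x)
            + ((x:ℂ)^(n+1) - (x:ℂ)) * (((-w:ℝ):ℂ) * Complex.exp ((-w:ℝ)*x))) x := fun x =>
        ((hasDerivAt_ofReal_pow n x).sub ((hasDerivAt_id x).ofReal_comp)).mul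
          (hasDerivAt_expw (-w) x)
      have hIn : Integrable (fun x : ℝ => ((n:ℂ)+1) * ((x:ℂ)^n * F₂ x)) unitIntervalMeasure :=
        (integrable_contMul hF₂int (by fun_prop)).const_mul _
      have h4 : ∫ x, (starRingEnd ℂ) (u.snd x)
            * (deriv (fun x : ℝ => ((x:ℂ)^(n+1) - (x:ℂ)) * Complex.exp ((-w:ℝ) * x)) x
              + (w:ℂ) * (((x:ℂ)^(n+1) - (x:ℂ)) * Complex.exp ((-w:ℝ) * x))) ∂unitIntervalMeasure
          = ((n:ℂ)+1) * (∫ x, (x:ℂ)^n * F₂ x ∂unitIntervalMeasure) - K := by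
        rw [← integral_const_mul, hK, ← integral_sub hIn hF₂int]
        refine integral_congr_ae (ae_of_all _ fun x => ?_)
        simp only [(hD x).deriv, hF₂]
        push_cast
        ring
      rw [h4] at h1
      rw [eq_div_iff hne]
      linear_combination h1
    have hsnd : ⇑u.snd =ᵐ[unitIntervalMeasure]
        fun x => (starRingEnd ℂ) K * Complex.exp (w * x) := by
      have hG : (fun x : ℝ => F₂ x - K) =ᵐ[unitIntervalMeasure] 0 := by
        refine keyLemma (hF₂int.sub (integrable_const K)) fun n => ?_
        have hne : ((n:ℂ)+1) ≠ 0 := Nat.cast_add_one_ne_zero n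
        have hsplit : ∫ x, (x:ℂ)^n * (F₂ x - K) ∂unitIntervalMeasure
            = (∫ x, (x:ℂ)^n * F₂ x ∂unitIntervalMeasure)
              - ∫ x, (x:ℂ)^n * K ∂unitIntervalMeasure := by
          rw [← integral_sub (integrable_contMul hF₂int (by fun_prop))
            (integrable_contMul (integrable_const K) (by fun_prop))]
          refine integral_congr_ae (ae_of_all _ fun x => ?_)
          ring
        rw [hsplit, hmom n, integral_mul_const, integral_monomial]
        push_cast
        field_simp
        ring
      filter_upwards [hG] with x hx
      have hx' : F₂ x = K := sub_eq_zero.1 (by simpa using hx)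
      have hconj : (starRingEnd ℂ) (u.snd x) = Complex.exp (w * x) * K := by
        calc (starRingEnd ℂ) (u.snd x)
            = (Complex.exp ((w:ℝ) * x) * Complex.exp (((-w:ℝ):ℂ) * x))
              * (starRingEnd ℂ) (u.snd x) := by
              rw [← Complex.exp_add,
                show ((w:ℝ):ℂ) * (x:ℂ) + ((-w:ℝ):ℂ) * (x:ℂ) = 0 by push_cast; ring,
                Complex.exp_zero, one_mul]
          _ = Complex.exp ((w:ℝ) * x) * F₂ x := by
              simp only [hF₂]; ring
          _ = Complex.exp (w * x) * K := by rw [hx']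
      have hcc := congrArg (starRingEnd ℂ) hconj
      simp only [RingHomCompTriple.comp_apply, RingHom.id_apply, map_mul, conj_expw] at hcc
      rw [hcc]
      ring
    refine Submodule.mem_span_singleton.2 ⟨(starRingEnd ℂ) K, ?_⟩
    refine (WithLp.equiv 2 (L2I × L2I)).injective (Prod.ext ?_ ?_)
    · show (starRingEnd ℂ) K • (toL2I 0) = u.fst
      rw [toL2I_zero, smul_zero]
      exact (Lp.ext (hfst0.trans (Lp.coeFn_zero ℂ 2 unitIntervalMeasure).symm)).symm
    · show (starRingEnd ℂ) K • (toL2I (fun x : ℝ => Complex.exp (w * x))) = u.snd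
      refine Lp.ext ?_
      filter_upwards [Lp.coeFn_smul ((starRingEnd ℂ) K)
          (toL2I (fun x : ℝ => Complex.exp (w * x))),
        coeFn_toL2I (memL2_of_continuous (contDiff_expw w).continuous), hsnd] with x h1 h2 h3
      rw [h1, Pi.smul_apply, h2, h3]
      simp [smul_eq_mul]
  · intro huspan
    obtain ⟨c, hc⟩ := Submodule.mem_span_singleton.1 huspan
    rw [← hc]
    refine ⟨Submodule.smul_mem _ c hmem, ?_⟩
    exact LinearPMap.adjoint_apply_eq hT _ (fun v => by
      rw [inner_zero_left, inner_smul_left, hinner0 v, mul_zero])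

end
end

section
/- Let w > 0 be a real number. Let K = ℂ ⊕ L²((0,1),ℂ) ⊕ L²((0,1),ℂ), with dense domain D′ = ℂ ⊕ {(f,g) : f and g are restrictions to [0,1] of smooth functions ℝ → ℂ, and f(0) = f(1) = 0}, and define S_w : D′ → K by S_w(z,f,g) = ( ∫₀¹ w·e^{w(x−1)} g(x) dx , −g′ + w·g , f′ + w·f + z·w·e^{w(·−1)} ). Then for every u ∈ D′ one has ‖S_w u‖² ≥ (1/2)·w·(1 − e^{−2w})·‖u‖². -/
open MeasureTheory

noncomputable section

/-- `K = ℂ ⊕ L²((0,1),ℂ) ⊕ L²((0,1),ℂ)`, with its Hilbert space structure. -/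
abbrev BlockHilbert := WithLp 2 (ℂ × EdgeHilbert)

/-- The element of `K = ℂ ⊕ L² ⊕ L²` determined by a scalar and a pair of functions. -/
noncomputable def blockTriple (z : ℂ) (f g : ℝ → ℂ) : BlockHilbert :=
  (WithLp.equiv 2 (ℂ × EdgeHilbert)).symm (z, edgePair f g)

/-- The operator `S_w(z,f,g) = (∫₀¹ w·e^{w(x−1)}·g(x) dx, −g′ + w·g,
f′ + w·f + z·w·e^{w(·−1)})` on the block `K`. -/
noncomputable def blockOp (w : ℝ) (z : ℂ) (f g : ℝ → ℂ) : BlockHilbert :=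
  blockTriple
    (∫ x in (0:ℝ)..1, (w : ℂ) * Complex.exp ((w : ℂ) * ((x : ℂ) - 1)) * g x)
    (fun x => -deriv g x + w * g x)
    (fun x => deriv f x + w * f x + z * (w : ℂ) * Complex.exp ((w : ℂ) * ((x : ℂ) - 1)))

/-! ### Auxiliary infrastructure -/

instance inst_s10 : IsFiniteMeasure unitIntervalMeasure := by
  constructor
  rw [Measure.restrict_apply_univ]
  exact lt_of_le_of_lt (le_of_eq Real.volume_Ioo) (by norm_num)

lemma mem2 {p : ℝ → ℂ} (hp : Continuous p) : MemLp p 2 unitIntervalMeasure := by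
  obtain ⟨C, hC⟩ := (isCompact_Icc (a:=(0:ℝ)) (b:=1)).exists_bound_of_continuousOn hp.continuousOn
  apply MemLp.of_bound hp.aestronglyMeasurable C
  filter_upwards [MeasureTheory.ae_restrict_mem measurableSet_Ioo] with x hx
  exact hC x (Set.mem_Icc_of_Ioo hx)

lemma inner_toL2I {p q : ℝ → ℂ} (hp : Continuous p) (hq : Continuous q) :
    (inner ℂ (toL2I p) (toL2I q) : ℂ) = ∫ x in (0:ℝ)..1, (starRingEnd ℂ) (p x) * q x := by
  rw [toL2I, toL2I, dif_pos (mem2 hp), dif_pos (mem2 hq), MeasureTheory.L2.inner_def]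
  have : ∫ a, (inner ℂ (((mem2 hp).toLp p) a) (((mem2 hq).toLp q) a) : ℂ) ∂unitIntervalMeasure
      = ∫ a, (starRingEnd ℂ) (p a) * q a ∂unitIntervalMeasure := by
    apply MeasureTheory.integral_congr_ae
    filter_upwards [(mem2 hp).coeFn_toLp, (mem2 hq).coeFn_toLp] with x h1 h2
    rw [h1, h2, RCLike.inner_apply, mul_comm]
  rw [this, intervalIntegral.integral_of_le zero_le_one,
    ← MeasureTheory.integral_Ioc_eq_integral_Ioo]

lemma norm_toL2I_sq {p : ℝ → ℂ} (hp : Continuous p) :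
    ‖toL2I p‖ ^ 2 = (∫ x in (0:ℝ)..1, (starRingEnd ℂ) (p x) * p x).re := by
  rw [← inner_toL2I hp hp]
  exact (norm_sq_eq_re_inner (𝕜 := ℂ) _)

lemma toL2I_add {p q : ℝ → ℂ} (hp : Continuous p) (hq : Continuous q) :
    toL2I (fun x => p x + q x) = toL2I p + toL2I q := by
  rw [toL2I, toL2I, toL2I, dif_pos (mem2 hp), dif_pos (mem2 hq),
    dif_pos (mem2 (p := fun x => p x + q x) (hp.add hq)), ← MemLp.toLp_add (mem2 hp) (mem2 hq)]
  rfl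

lemma toL2I_smul {p : ℝ → ℂ} (hp : Continuous p) (z : ℂ) :
    toL2I (fun x => z * p x) = z • toL2I p := by
  rw [toL2I, toL2I, dif_pos (mem2 hp), dif_pos (mem2 (p := fun x => z * p x) (continuous_const.mul hp))]
  rw [← MemLp.toLp_const_smul z (mem2 hp)]
  rfl

lemma intervalIntegral_conj {F : ℝ → ℂ} :
    (∫ x in (0:ℝ)..1, (starRingEnd ℂ) (F x)) = (starRingEnd ℂ) (∫ x in (0:ℝ)..1, F x) := by
  rw [intervalIntegral.integral_of_le zero_le_one,
    intervalIntegral.integral_of_le zero_le_one, integral_conj]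

lemma contConj {f : ℝ → ℂ} (hf : Continuous f) :
    Continuous fun x => (starRingEnd ℂ) (f x) := continuous_star.comp hf

lemma parts_zero {p p' q q' : ℝ → ℂ} (hp : Continuous p) (hp' : Continuous p')
    (hq : Continuous q) (hq' : Continuous q')
    (hdp : ∀ x, HasDerivAt p (p' x) x) (hdq : ∀ x, HasDerivAt q (q' x) x)
    (q0 : q 0 = 0) (q1 : q 1 = 0) :
    ∫ x in (0:ℝ)..1, ((starRingEnd ℂ) (p' x) * q x + (starRingEnd ℂ) (p x) * q' x) = 0 := by
  have h := intervalIntegral.integral_deriv_mul_eq_sub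
    (u := fun x => (starRingEnd ℂ) (p x)) (v := q)
    (u' := fun x => (starRingEnd ℂ) (p' x)) (v' := q')
    (fun x _ => by simpa [Complex.star_def] using (hdp x).star)
    (fun x _ => hdq x)
    ((contConj hp').intervalIntegrable 0 1)
    (hq'.intervalIntegrable 0 1)
  rw [h, q0, q1, mul_zero, mul_zero, sub_zero]

lemma bp (w : ℝ) {p p' q q' : ℝ → ℂ} (hp : Continuous p) (hp' : Continuous p')
    (hq : Continuous q) (hq' : Continuous q')
    (hdp : ∀ x, HasDerivAt p (p' x) x) (hdq : ∀ x, HasDerivAt q (q' x) x)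
    (q0 : q 0 = 0) (q1 : q 1 = 0) :
    ∫ x in (0:ℝ)..1, (starRingEnd ℂ) (-p' x + (w:ℂ) * p x) * q x
      = ∫ x in (0:ℝ)..1, (starRingEnd ℂ) (p x) * (q' x + (w:ℂ) * q x) := by
  have i1 : IntervalIntegrable (fun x => (starRingEnd ℂ) (-p' x + (w:ℂ) * p x) * q x) volume 0 1 :=
    (((contConj ((hp'.neg).add (continuous_const.mul hp)))).mul hq).intervalIntegrable 0 1
  have i2 : IntervalIntegrable (fun x => (starRingEnd ℂ) (p x) * (q' x + (w:ℂ) * q x)) volume 0 1 :=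
    ((contConj hp).mul (hq'.add (continuous_const.mul hq))).intervalIntegrable 0 1
  rw [← sub_eq_zero, ← intervalIntegral.integral_sub i1 i2]
  have : (fun x => (starRingEnd ℂ) (-p' x + (w:ℂ) * p x) * q x
      - (starRingEnd ℂ) (p x) * (q' x + (w:ℂ) * q x))
      = fun x => -((starRingEnd ℂ) (p' x) * q x + (starRingEnd ℂ) (p x) * q' x) := by
    funext x
    simp only [map_add, map_neg, map_mul, Complex.conj_ofReal]
    ring
  rw [this, intervalIntegral.integral_neg, parts_zero hp hp' hq hq' hdp hdq q0 q1, neg_zero]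

lemma re_inner_deriv_zero {h h' : ℝ → ℂ} (hc : Continuous h) (hc' : Continuous h')
    (hd : ∀ x, HasDerivAt h (h' x) x) (h0 : h 0 = 0) (h1 : h 1 = 0) :
    (∫ x in (0:ℝ)..1, (starRingEnd ℂ) (h' x) * h x).re = 0 := by
  have hz := parts_zero hc hc' hc hc' hd hd h0 h1
  have i1 : IntervalIntegrable (fun x => (starRingEnd ℂ) (h' x) * h x) volume 0 1 :=
    ((contConj hc').mul hc).intervalIntegrable 0 1
  have i2 : IntervalIntegrable (fun x => (starRingEnd ℂ) (h x) * h' x) volume 0 1 :=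
    ((contConj hc).mul hc').intervalIntegrable 0 1
  rw [intervalIntegral.integral_add i1 i2] at hz
  have h2 : (∫ x in (0:ℝ)..1, (starRingEnd ℂ) (h x) * h' x)
      = (starRingEnd ℂ) (∫ x in (0:ℝ)..1, (starRingEnd ℂ) (h' x) * h x) := by
    rw [← intervalIntegral_conj]
    congr 1; funext x
    simp only [map_mul, RingHomCompTriple.comp_apply, RingHom.id_apply, starRingEnd_self_apply]
    ring
  rw [h2, Complex.add_conj] at hz
  have := congrArg Complex.re hz
  simpa using this

lemma norm_deriv_add_sq (w : ℝ) {h h' : ℝ → ℂ} (hc : Continuous h) (hc' : Continuous h')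
    (hd : ∀ x, HasDerivAt h (h' x) x) (h0 : h 0 = 0) (h1 : h 1 = 0) :
    ‖toL2I (fun x => h' x + (w:ℂ) * h x)‖ ^ 2 = ‖toL2I h'‖ ^ 2 + w ^ 2 * ‖toL2I h‖ ^ 2 := by
  have hsplit : toL2I (fun x => h' x + (w:ℂ) * h x) = toL2I h' + (w:ℂ) • toL2I h := by
    rw [← toL2I_smul hc (w:ℂ), ← toL2I_add (q := fun x => (w:ℂ) * h x) hc' (continuous_const.mul hc)]
  rw [hsplit, @norm_add_sq ℂ]
  rw [inner_smul_right, inner_toL2I hc' hc]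
  have hre := re_inner_deriv_zero hc hc' hd h0 h1
  have : RCLike.re ((w:ℂ) * ∫ x in (0:ℝ)..1, (starRingEnd ℂ) (h' x) * h x) = 0 := by
    simp [RCLike.re_to_complex, Complex.mul_re, hre]
  rw [this, norm_smul]
  simp [mul_pow]

def phiF (w : ℝ) (x : ℝ) : ℂ := (w:ℂ) * Complex.exp ((w:ℂ) * ((x:ℂ) - 1))

lemma phiF_cont (w : ℝ) : Continuous (phiF w) := by
  unfold phiF
  exact continuous_const.mul (Complex.continuous_exp.comp
    (continuous_const.mul (Complex.continuous_ofReal.sub continuous_const)))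

lemma phiF_hasDeriv (w : ℝ) (x : ℝ) : HasDerivAt (phiF w) ((w:ℂ) * phiF w x) x := by
  have h1 : HasDerivAt (fun ζ : ℂ => (w:ℂ) * Complex.exp ((w:ℂ) * (ζ - 1)))
      ((w:ℂ) * ((w:ℂ) * Complex.exp ((w:ℂ) * ((x:ℂ) - 1)))) (x:ℂ) := by
    have h2 : HasDerivAt (fun ζ : ℂ => (w:ℂ) * (ζ - 1)) (w:ℂ) (x:ℂ) := by
      simpa using ((hasDerivAt_id ((x:ℂ))).sub_const 1).const_mul (w:ℂ)
    simpa [mul_comm] using (h2.cexp).const_mul (w:ℂ)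
  exact h1.comp_ofReal

lemma phiF_conj (w : ℝ) (x : ℝ) : (starRingEnd ℂ) (phiF w x) = phiF w x := by
  simp [phiF, ← Complex.exp_conj, map_mul, map_sub, Complex.conj_ofReal]

lemma phiF_sq_integral (w : ℝ) (hw : 0 < w) :
    ∫ x in (0:ℝ)..1, (starRingEnd ℂ) (phiF w x) * phiF w x
      = ((2⁻¹ * w * (1 - Real.exp (-(2*w))) : ℝ) : ℂ) := by
  have key : ∀ x : ℝ, HasDerivAt (fun y : ℝ => ((w:ℂ)/2) * Complex.exp (2*(w:ℂ)*((y:ℂ)-1)))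
      ((starRingEnd ℂ) (phiF w x) * phiF w x) x := by
    intro x
    have h2 : HasDerivAt (fun ζ : ℂ => 2*(w:ℂ)*(ζ - 1)) (2*(w:ℂ)) (x:ℂ) := by
      simpa using ((hasDerivAt_id ((x:ℂ))).sub_const 1).const_mul (2*(w:ℂ))
    have h1 := ((h2.cexp).const_mul ((w:ℂ)/2)).comp_ofReal
    have : (w:ℂ)/2 * (Complex.exp (2*(w:ℂ)*((x:ℂ)-1)) * (2*(w:ℂ)))
        = (starRingEnd ℂ) (phiF w x) * phiF w x := by
      rw [phiF_conj]
      unfold phiF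
      rw [show (↑w * Complex.exp (↑w * (↑x - 1)) * (↑w * Complex.exp (↑w * (↑x - 1))))
        = ↑w * ↑w * (Complex.exp (↑w * (↑x - 1)) * Complex.exp (↑w * (↑x - 1))) by ring,
        ← Complex.exp_add]
      ring_nf
    rwa [this] at h1
  rw [intervalIntegral.integral_eq_sub_of_hasDerivAt (fun x _ => key x)
    (((contConj (phiF_cont w)).mul (phiF_cont w)).intervalIntegrable 0 1)]
  push_cast [Complex.ofReal_exp]
  rw [show ((1:ℂ) - 1) = 0 by ring, show (2*(w:ℂ)*((0:ℂ)-1)) = -(2*w) by ring]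
  simp [Complex.exp_zero]
  ring

lemma solveF (w : ℝ) {k : ℝ → ℂ} (hk : Continuous k)
    (hint : ∫ x in (0:ℝ)..1, Complex.exp ((w:ℂ)*(x:ℂ)) * k x = 0) :
    ∃ F F' : ℝ → ℂ, Continuous F ∧ Continuous F' ∧ (∀ x, HasDerivAt F (F' x) x)
      ∧ F 0 = 0 ∧ F 1 = 0 ∧ (∀ x, F' x + (w:ℂ) * F x = k x) := by
  set J : ℝ → ℂ := fun x => ∫ t in (0:ℝ)..x, Complex.exp ((w:ℂ)*(t:ℂ)) * k t with hJ
  have hkc : Continuous fun t : ℝ => Complex.exp ((w:ℂ)*(t:ℂ)) * k t :=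
    (Complex.continuous_exp.comp (continuous_const.mul Complex.continuous_ofReal)).mul hk
  have hJd : ∀ x : ℝ, HasDerivAt J (Complex.exp ((w:ℂ)*(x:ℂ)) * k x) x := fun x =>
    (hkc.integral_hasStrictDerivAt 0 x).hasDerivAt
  have hJc : Continuous J := by
    apply continuous_iff_continuousAt.2
    exact fun x => (hJd x).continuousAt
  have hEd : ∀ x : ℝ, HasDerivAt (fun y : ℝ => Complex.exp (-(w:ℂ)*(y:ℂ)))
      (-(w:ℂ) * Complex.exp (-(w:ℂ)*(x:ℂ))) x := by
    intro x
    have h2 : HasDerivAt (fun ζ : ℂ => Complex.exp (-(w:ℂ)*ζ))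
        (Complex.exp (-(w:ℂ)*(x:ℂ)) * (-(w:ℂ))) (x:ℂ) := by
      simpa using ((hasDerivAt_id ((x:ℂ))).const_mul (-(w:ℂ))).cexp
    simpa [mul_comm] using h2.comp_ofReal
  have hEc : Continuous fun y : ℝ => Complex.exp (-(w:ℂ)*(y:ℂ)) :=
    Complex.continuous_exp.comp (continuous_const.mul Complex.continuous_ofReal)
  refine ⟨fun x => Complex.exp (-(w:ℂ)*(x:ℂ)) * J x,
    fun x => k x - (w:ℂ) * (Complex.exp (-(w:ℂ)*(x:ℂ)) * J x),
    hEc.mul hJc, hk.sub (continuous_const.mul (hEc.mul hJc)), ?_, ?_, ?_, ?_⟩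
  · intro x
    have := (hEd x).mul (hJd x)
    have heq : (-(w:ℂ) * Complex.exp (-(w:ℂ)*(x:ℂ))) * J x
        + Complex.exp (-(w:ℂ)*(x:ℂ)) * (Complex.exp ((w:ℂ)*(x:ℂ)) * k x)
        = k x - (w:ℂ) * (Complex.exp (-(w:ℂ)*(x:ℂ)) * J x) := by
      rw [show Complex.exp (-(w:ℂ)*(x:ℂ)) * (Complex.exp ((w:ℂ)*(x:ℂ)) * k x)
        = (Complex.exp (-(w:ℂ)*(x:ℂ)) * Complex.exp ((w:ℂ)*(x:ℂ))) * k x by ring,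
        ← Complex.exp_add]
      simp
      ring
    rwa [heq] at this
  · simp [hJ]
  · simp only [hJ]
    rw [hint, mul_zero]
  · intro x; ring

lemma blockTriple_norm_sq (a : ℂ) (p q : ℝ → ℂ) :
    ‖blockTriple a p q‖ ^ 2 = ‖a‖ ^ 2 + ‖toL2I p‖ ^ 2 + ‖toL2I q‖ ^ 2 := by
  rw [blockTriple, WithLp.prod_norm_sq_eq_of_L2]
  have h2 : ‖((WithLp.equiv 2 (ℂ × EdgeHilbert)).symm (a, edgePair p q)).snd‖ ^ 2
      = ‖toL2I p‖ ^ 2 + ‖toL2I q‖ ^ 2 := by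
    show ‖edgePair p q‖ ^ 2 = _
    rw [edgePair, WithLp.prod_norm_sq_eq_of_L2]
    rfl
  rw [h2]
  show ‖a‖ ^ 2 + (‖toL2I p‖ ^ 2 + ‖toL2I q‖ ^ 2) = _
  ring

lemma key_real {w c P U Fn : ℝ} (hw : 0 < w) (hcw : c ≤ w^2)
    (hP : 0 ≤ P) (hU : 0 ≤ U) (hF : 0 ≤ Fn)
    (h1 : P^2 ≤ U * Fn) (h2 : w^2 * Fn^2 ≤ P^2) : c * P^2 ≤ U^2 := by
  rcases eq_or_lt_of_le hP with h0 | hPpos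
  · rw [← h0]; nlinarith
  · have h3 : w * Fn ≤ P := by nlinarith
    have h4 : w * P ≤ U := le_of_mul_le_mul_right (by nlinarith) hPpos
    have h5 : (w*P)*(w*P) ≤ U*U := mul_self_le_mul_self (by positivity) h4
    nlinarith [mul_le_mul_of_nonneg_right hcw (sq_nonneg P)]

/-- Let `w > 0`.  On `K = ℂ ⊕ L² ⊕ L²` with dense domain
`D′ = ℂ ⊕ {(f,g) : f, g smooth, f(0) = f(1) = 0}` define
`S_w(z,f,g) = (∫₀¹ w·e^{w(x−1)} g(x) dx, −g′ + w·g, f′ + w·f + z·w·e^{w(·−1)})`.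
Then for every `u ∈ D′`, `‖S_w u‖² ≥ (1/2)·w·(1 − e^{−2w})·‖u‖²`. -/
theorem blockOp_norm_sq_lower_bound (w : ℝ) (hw : 0 < w)
    (z : ℂ) (f g : ℝ → ℂ) (hfg : EdgeDomRep f g) :
    ‖blockOp w z f g‖ ^ 2
      ≥ (1 / 2) * w * (1 - Real.exp (-(2 * w))) * ‖blockTriple z f g‖ ^ 2 := by
  obtain ⟨hf, hg, f0, f1⟩ := hfg
  set c : ℝ := 2⁻¹ * w * (1 - Real.exp (-(2*w))) with hc
  have hfc : Continuous f := hf.continuous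
  have hgc : Continuous g := hg.continuous
  have hf'c : Continuous (deriv f) := hf.continuous_deriv (by simp)
  have hg'c : Continuous (deriv g) := hg.continuous_deriv (by simp)
  have hfd : ∀ x, HasDerivAt f (deriv f x) x :=
    fun x => (hf.differentiable (by simp) x).hasDerivAt
  have hgd : ∀ x, HasDerivAt g (deriv g x) x :=
    fun x => (hg.differentiable (by simp) x).hasDerivAt
  have hφc := phiF_cont w
  have hφ'c : Continuous fun x => (w:ℂ) * phiF w x := continuous_const.mul hφc
  have hφd := phiF_hasDeriv w
  have hcpos : 0 < c := by
    have hE : Real.exp (-(2*w)) < 1 := Real.exp_lt_one_iff.2 (by linarith)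
    rw [hc]; nlinarith
  have hcw : c ≤ w^2 := by
    have h1 : 1 - Real.exp (-(2*w)) ≤ 2*w := by
      have := Real.add_one_le_exp (-(2*w)); linarith
    rw [hc]; nlinarith
  set Φ := toL2I (phiF w) with hΦ
  have hΦΦ : (inner ℂ Φ Φ : ℂ) = ((c:ℝ):ℂ) := by
    rw [hΦ, inner_toL2I hφc hφc, phiF_sq_integral w hw]
  have hΦn : ‖Φ‖^2 = c := by
    have h := norm_sq_eq_re_inner (𝕜 := ℂ) Φ
    rw [hΦΦ] at h
    simpa using h
  -- unfold the norms
  have hBO : ‖blockOp w z f g‖^2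
      = ‖∫ x in (0:ℝ)..1, (w : ℂ) * Complex.exp ((w : ℂ) * ((x : ℂ) - 1)) * g x‖^2
      + ‖toL2I (fun x => -deriv g x + (w:ℂ) * g x)‖^2
      + ‖toL2I (fun x => deriv f x + (w:ℂ) * f x
          + z * (w:ℂ) * Complex.exp ((w:ℂ) * ((x:ℂ) - 1)))‖^2 := by
    rw [blockOp, blockTriple_norm_sq]
  have hBT : ‖blockTriple z f g‖^2 = ‖z‖^2 + ‖toL2I f‖^2 + ‖toL2I g‖^2 :=
    blockTriple_norm_sq z f g
  -- the f-part
  have hAc : Continuous (fun x => deriv f x + (w:ℂ) * f x) :=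
    hf'c.add (continuous_const.mul hfc)
  set A := toL2I (fun x => deriv f x + (w:ℂ) * f x) with hA
  have hΦA : (inner ℂ Φ A : ℂ) = 0 := by
    rw [hΦ, hA, inner_toL2I hφc hAc,
      ← bp w hφc hφ'c hfc hf'c hφd hfd f0 f1]
    have : (fun x => (starRingEnd ℂ) (-((w:ℂ) * phiF w x) + (w:ℂ) * phiF w x) * f x)
        = fun _ : ℝ => (0:ℂ) := by
      funext x; simp
    rw [this, intervalIntegral.integral_zero]
  have hvsplit : toL2I (fun x => deriv f x + (w:ℂ) * f x
      + z * (w:ℂ) * Complex.exp ((w:ℂ) * ((x:ℂ) - 1))) = A + z • Φ := by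
    have hveq : (fun x => deriv f x + (w:ℂ) * f x
        + z * (w:ℂ) * Complex.exp ((w:ℂ) * ((x:ℂ) - 1)))
        = fun x => (deriv f x + (w:ℂ) * f x) + z * phiF w x := by
      funext x; unfold phiF; ring
    rw [hveq, toL2I_add (q := fun x => z * phiF w x) hAc (continuous_const.mul hφc), toL2I_smul hφc z, hA, hΦ]
  have hVnorm : ‖toL2I (fun x => deriv f x + (w:ℂ) * f x
      + z * (w:ℂ) * Complex.exp ((w:ℂ) * ((x:ℂ) - 1)))‖^2
      = ‖A‖^2 + c * ‖z‖^2 := by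
    rw [hvsplit, @norm_add_sq ℂ]
    have h1 : (inner ℂ A (z • Φ) : ℂ) = 0 := by
      rw [inner_smul_right, ← inner_conj_symm, hΦA, map_zero, mul_zero]
    rw [h1, norm_smul]
    simp [mul_pow, hΦn]
    ring
  have hAbound : w^2 * ‖toL2I f‖^2 ≤ ‖A‖^2 := by
    rw [hA, norm_deriv_add_sq w hfc hf'c hfd f0 f1]
    linarith [sq_nonneg ‖toL2I (deriv f)‖]
  -- the g-part
  set G := toL2I g with hG
  set a : ℂ := inner ℂ Φ G with ha
  have hIa : (∫ x in (0:ℝ)..1, (w : ℂ) * Complex.exp ((w : ℂ) * ((x : ℂ) - 1)) * g x) = a := by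
    rw [ha, hΦ, hG, inner_toL2I hφc hgc]
    congr 1; funext x; rw [phiF_conj]; rfl
  have hcne : ((c:ℝ):ℂ) ≠ 0 := by
    exact_mod_cast ne_of_gt hcpos
  set gp : ℝ → ℂ := fun x => g x - (a / ((c:ℝ):ℂ)) * phiF w x with hgp
  have hgpc : Continuous gp := hgc.sub (continuous_const.mul hφc)
  have hGp : toL2I gp = G - (a/((c:ℝ):ℂ)) • Φ := by
    have hgpeq : gp = fun x => g x + (-(a/((c:ℝ):ℂ))) * phiF w x := by
      funext x; rw [hgp]; ring
    rw [hgpeq, toL2I_add (q := fun x => (-(a/((c:ℝ):ℂ))) * phiF w x) hgc (continuous_const.mul hφc), toL2I_smul hφc, hG, hΦ,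
      neg_smul, ← sub_eq_add_neg]
  have hΦGp : (inner ℂ Φ (toL2I gp) : ℂ) = 0 := by
    rw [hGp, inner_sub_right, inner_smul_right, hΦΦ, div_mul_cancel₀ _ hcne, ← ha, sub_self]
  have hGdecomp : G = toL2I gp + (a/((c:ℝ):ℂ)) • Φ := by
    rw [hGp]; abel
  have hPyth : ‖G‖^2 = ‖toL2I gp‖^2 + ‖a‖^2 / c := by
    rw [hGdecomp, @norm_add_sq ℂ]
    have h1 : (inner ℂ (toL2I gp) ((a/((c:ℝ):ℂ)) • Φ) : ℂ) = 0 := by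
      rw [inner_smul_right, ← inner_conj_symm, hΦGp, map_zero, mul_zero]
    have h2 : ‖(a/((c:ℝ):ℂ)) • Φ‖^2 = ‖a‖^2 / c := by
      rw [norm_smul, mul_pow, hΦn, norm_div, Complex.norm_real, Real.norm_of_nonneg hcpos.le]
      field_simp
    rw [h1, h2]
    simp
  have hintzero : ∫ x in (0:ℝ)..1, Complex.exp ((w:ℂ)*(x:ℂ)) * gp x = 0 := by
    have h0 : (inner ℂ Φ (toL2I gp) : ℂ) = 0 := hΦGp
    rw [hΦ, inner_toL2I hφc hgpc] at h0
    have hfac : (fun x : ℝ => (starRingEnd ℂ) (phiF w x) * gp x)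
        = fun x : ℝ => ((w:ℂ) * Complex.exp (-(w:ℂ))) * (Complex.exp ((w:ℂ)*(x:ℂ)) * gp x) := by
      funext x
      rw [phiF_conj]
      unfold phiF
      rw [show (w:ℂ)*((x:ℂ)-1) = (w:ℂ)*(x:ℂ) + (-(w:ℂ)) by ring, Complex.exp_add]
      ring
    rw [hfac, intervalIntegral.integral_const_mul] at h0
    rcases mul_eq_zero.1 h0 with h | h
    · exact ((mul_ne_zero (by exact_mod_cast ne_of_gt hw) (Complex.exp_ne_zero _)) h).elim
    · exact h
  obtain ⟨F, F', hFc, hF'c, hFd, hF0, hF1, hFk⟩ := solveF w hgpc hintzero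
  have hufc : Continuous (fun x => -deriv g x + (w:ℂ) * g x) :=
    (hg'c.neg).add (continuous_const.mul hgc)
  have hFsum : toL2I (fun x => F' x + (w:ℂ) * F x) = toL2I gp := by
    congr 1; funext x; exact hFk x
  have hUF : (inner ℂ (toL2I (fun x => -deriv g x + (w:ℂ) * g x)) (toL2I F) : ℂ)
      = ((‖toL2I gp‖^2 : ℝ) : ℂ) := by
    rw [inner_toL2I hufc hFc, bp w hgc hg'c hFc hF'c hgd hFd hF0 hF1,
      ← inner_toL2I (q := fun x => F' x + (w:ℂ) * F x) hgc (hF'c.add (continuous_const.mul hFc)), hFsum, ← hG, hGdecomp,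
      inner_add_left, inner_smul_left, hΦGp, mul_zero, add_zero, inner_self_eq_norm_sq_to_K]
    norm_cast
  have hFbound : w^2 * ‖toL2I F‖^2 ≤ ‖toL2I gp‖^2 := by
    have h := norm_deriv_add_sq w hFc hF'c hFd hF0 hF1
    rw [hFsum] at h
    linarith [sq_nonneg ‖toL2I F'‖]
  have hUbound : c * ‖toL2I gp‖^2 ≤ ‖toL2I (fun x => -deriv g x + (w:ℂ) * g x)‖^2 := by
    have hcs := norm_inner_le_norm (𝕜 := ℂ)
      (toL2I (fun x => -deriv g x + (w:ℂ) * g x)) (toL2I F)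
    rw [hUF] at hcs
    have h1 : ‖toL2I gp‖^2 ≤ ‖toL2I (fun x => -deriv g x + (w:ℂ) * g x)‖ * ‖toL2I F‖ := by
      calc ‖toL2I gp‖^2 = ‖((‖toL2I gp‖^2 : ℝ) : ℂ)‖ := by
            rw [Complex.norm_real, Real.norm_of_nonneg (sq_nonneg _)]
        _ ≤ _ := hcs
    exact key_real hw hcw (norm_nonneg _) (norm_nonneg _) (norm_nonneg _) h1 hFbound
  -- final assembly
  rw [ge_iff_le, hBO, hBT, hIa, hPyth,
    show (1/2) * w * (1 - Real.exp (-(2 * w))) = c by rw [hc]; ring]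
  have hmul1 : c * ‖toL2I f‖^2 ≤ w^2 * ‖toL2I f‖^2 :=
    mul_le_mul_of_nonneg_right hcw (sq_nonneg _)
  have e1 : c * (‖z‖^2 + ‖toL2I f‖^2 + (‖toL2I gp‖^2 + ‖a‖^2 / c))
      = c*‖z‖^2 + c*‖toL2I f‖^2 + c*‖toL2I gp‖^2 + ‖a‖^2 := by
    field_simp
    ring
  rw [e1, hVnorm]
  linarith [hAbound, hUbound, hmul1]

end
end
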